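/- arXiv:2012.00802 — 2 statements merged into one kernel-verified Lean document; each statement's English description precedes it below -/
import Mathlib

section
/- Let $w^{(t)} \in \mathbb{R}_{>0}^k$ be defined by $w^{(1)}_i = 1$ and $w^{(t+1)}_i = w^{(t)}_i e^{\eta \ell_t(i)}$ with $\ell_t(i) \in [0,R]$ and $0 < \eta R \le 1$. Let $\Phi_t = \sum_i w_i^{(t)}$ and $p_t = w^{(t)}/\Phi_t$. Then $\Phi_{t+1} \le \Phi_t \exp\big(\eta \langle p_t, \ell_t\rangle (1 + \eta R)\big)$. -/
lemma exp_le_quad {x : ℝ} (h0 : 0 ≤ x) (h1 : x ≤ 1) :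
    Real.exp x ≤ 1 + x + x ^ 2 := by
  have := Real.exp_bound' h0 h1 (n := 3) (by norm_num)
  have hx3 : x ^ 3 ≤ x ^ 2 := pow_le_pow_of_le_one h0 h1 (by norm_num)
  simp [Finset.sum_range_succ, Nat.factorial] at this
  nlinarith [sq_nonneg x]

/-- Potential function step in the multiplicative weights analysis:
if `w⁽ᵗ⁺¹⁾ᵢ = w⁽ᵗ⁾ᵢ e^{η ℓₜ(i)}` with `ℓₜ(i) ∈ [0,R]` and `0 < ηR ≤ 1`, and
`Φₜ = ∑ᵢ w⁽ᵗ⁾ᵢ`, `pₜ = w⁽ᵗ⁾/Φₜ`, then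
`Φ_{t+1} ≤ Φₜ · exp(η ⟨pₜ, ℓₜ⟩ (1 + ηR))`. -/
theorem mw_potential_step (k : ℕ) (hk : 0 < k) (R η : ℝ)
    (hηpos : 0 < η) (hηR : η * R ≤ 1)
    (ℓ : ℕ → Fin k → ℝ) (hℓ : ∀ t i, ℓ t i ∈ Set.Icc (0:ℝ) R)
    (w : ℕ → Fin k → ℝ) (hwpos : ∀ t i, 0 < w t i)
    (hw0 : ∀ i, w 0 i = 1)
    (hwsucc : ∀ t i, w (t + 1) i = w t i * Real.exp (η * ℓ t i))
    (t : ℕ) :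
    (∑ i, w (t + 1) i) ≤
      (∑ i, w t i) *
        Real.exp (η * (∑ i, (w t i / ∑ i', w t i') * ℓ t i) * (1 + η * R)) := by
  set Φ : ℝ := ∑ i, w t i with hΦ
  have hΦpos : 0 < Φ := Finset.sum_pos (fun i _ => hwpos t i) (by
    simpa [Finset.univ_nonempty_iff] using Fin.pos_iff_nonempty.mp hk)
  set S : ℝ := ∑ i, w t i * ℓ t i with hS
  have hSnn : 0 ≤ S := Finset.sum_nonneg fun i _ =>
    mul_nonneg (hwpos t i).le (hℓ t i).1
  have hp : (∑ i, (w t i / ∑ i', w t i') * ℓ t i) = S / Φ := by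
    rw [hS, Finset.sum_div]
    exact Finset.sum_congr rfl fun i _ => by ring
  have step1 : (∑ i, w (t + 1) i) ≤ Φ + η * (1 + η * R) * S := by
    have : (∑ i, w (t + 1) i) ≤ ∑ i, w t i * (1 + η * ℓ t i * (1 + η * R)) := by
      refine Finset.sum_le_sum fun i _ => ?_
      rw [hwsucc t i]
      refine mul_le_mul_of_nonneg_left ?_ (hwpos t i).le
      have h0 : 0 ≤ η * ℓ t i := mul_nonneg hηpos.le (hℓ t i).1
      have h1 : η * ℓ t i ≤ 1 :=
        le_trans (mul_le_mul_of_nonneg_left (hℓ t i).2 hηpos.le) hηR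
      have h2 : (η * ℓ t i) ^ 2 ≤ (η * ℓ t i) * (η * R) := by
        rw [sq]
        exact mul_le_mul_of_nonneg_left
          (mul_le_mul_of_nonneg_left (hℓ t i).2 hηpos.le) h0
      calc Real.exp (η * ℓ t i) ≤ 1 + η * ℓ t i + (η * ℓ t i) ^ 2 :=
            exp_le_quad h0 h1
        _ ≤ 1 + η * ℓ t i + (η * ℓ t i) * (η * R) := by linarith
        _ = 1 + η * ℓ t i * (1 + η * R) := by ring
    calc (∑ i, w (t + 1) i) ≤ ∑ i, w t i * (1 + η * ℓ t i * (1 + η * R)) := this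
      _ = Φ + η * (1 + η * R) * S := by
          rw [hΦ, hS, Finset.mul_sum, ← Finset.sum_add_distrib]
          exact Finset.sum_congr rfl fun i _ => by ring
  rw [hp]
  have step2 : Φ + η * (1 + η * R) * S ≤ Φ * Real.exp (η * (S / Φ) * (1 + η * R)) := by
    have := Real.add_one_le_exp (η * (S / Φ) * (1 + η * R))
    have h3 : Φ * (η * (S / Φ) * (1 + η * R) + 1) = Φ + η * (1 + η * R) * S := by
      field_simp
      ring
    calc Φ + η * (1 + η * R) * S = Φ * (η * (S / Φ) * (1 + η * R) + 1) := h3.symm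
      _ ≤ Φ * Real.exp (η * (S / Φ) * (1 + η * R)) :=
          mul_le_mul_of_nonneg_left this hΦpos.le
  exact le_trans step1 step2
end

section
/- Suppose the multiplicative weights algorithm with rate $\eta = \epsilon/(2R^2)$, $\epsilon \in (0, R]$, and $T = \lceil 4R^2 \ln k / \epsilon^2 \rceil$ rounds is run with a $\delta$-approximate cost-sensitive oracle for losses $L_1,\dots,L_k : \Theta \to [0,R]$. Combining (a) the oracle guarantee $\langle p_t, \ell_t \rangle \le OPT + \delta$ where $OPT = \inf_\theta \max_i L_i(\theta)$ and $\ell_t(i) = L_i(\theta_t)$, (b) the potential bound $\Phi_{T+1} \le k \exp\big(\eta(1+\eta R)\sum_t \langle p_t,\ell_t\rangle\big)$, and (c) $\exp(\eta \sum_t \ell_t(j)) \le \Phi_{T+1}$, one obtains for every $j$: $\frac1T \sum_{t=1}^T L_j(\theta_t) \le OPT + \delta + \epsilon$ (assuming $OPT + \delta \le R$). -/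
/-- For `y ∈ [0,1]`, `exp y ≤ 1 + y + y²`. -/
lemma mw_exp_quad_bound {y : ℝ} (h0 : 0 ≤ y) (h1 : y ≤ 1) :
    Real.exp y ≤ 1 + y + y ^ 2 := by
  have h := Real.exp_bound' h0 h1 (n := 2) (by norm_num)
  simp only [Finset.sum_range_succ, Finset.sum_range_zero, Nat.factorial] at h
  norm_num at h
  nlinarith [sq_nonneg y]

set_option maxHeartbeats 1000000 in
/-- Full assembly of the main theorem's proof for the multiplicative weights
algorithm with a `δ`-approximate cost-sensitive oracle: with `η = ε/(2R²)`,
`ε ∈ (0, R]`, `T = ⌈4R² ln k / ε²⌉` rounds, oracle guarantee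
`⟨pₜ, ℓₜ⟩ ≤ OPT + δ` where `OPT = inf_θ maxᵢ Lᵢ(θ)` and `ℓₜ(i) = Lᵢ(θₜ)`, and
assuming `OPT + δ ≤ R`, every coordinate `j` satisfies
`(1/T) ∑ₜ L_j(θₜ) ≤ OPT + δ + ε`. -/
theorem mw_main_theorem_assembly
    {Θ : Type*} [Nonempty Θ] (k : ℕ) (hk : 0 < k) (R η ε δ : ℝ)
    (hR : 0 < R) (hε : 0 < ε) (hεR : ε ≤ R) (hδ : 0 ≤ δ)
    (hηdef : η = ε / (2 * R ^ 2))
    (T : ℕ) (hTdef : T = ⌈4 * R ^ 2 * Real.log k / ε ^ 2⌉₊) (hT : 0 < T)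
    (L : Fin k → Θ → ℝ) (hL : ∀ i θ, L i θ ∈ Set.Icc (0:ℝ) R)
    (θseq : ℕ → Θ)
    (w : ℕ → Fin k → ℝ)
    (hw0 : ∀ i, w 0 i = 1)
    (hwsucc : ∀ t i, w (t + 1) i = w t i * Real.exp (η * L i (θseq t)))
    (p : ℕ → Fin k → ℝ)
    (hp : ∀ t i, p t i = w t i / ∑ i', w t i')
    (OPT : ℝ)
    (hOPT : OPT = sInf (Set.range fun θ =>
      Finset.univ.sup' ⟨⟨0, hk⟩, Finset.mem_univ _⟩ fun i => L i θ))
    (hOracle : ∀ t, t < T → ∑ i, p t i * L i (θseq t) ≤ OPT + δ)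
    (hOPTδ : OPT + δ ≤ R)
    (j : Fin k) :
    (1 / (T : ℝ)) * ∑ t ∈ Finset.range T, L j (θseq t) ≤ OPT + δ + ε := by
  haveI : Nonempty (Fin k) := ⟨⟨0, hk⟩⟩
  have hη : 0 < η := by rw [hηdef]; positivity
  have hηR2 : η * R ^ 2 = ε / 2 := by
    rw [hηdef]; field_simp
  have hηR : η * R ≤ 1 / 2 := by
    rw [hηdef, div_mul_eq_mul_div, div_le_iff₀ (by positivity)]
    nlinarith
  -- explicit weight formula
  have hwf : ∀ t i, w t i = Real.exp (η * ∑ s ∈ Finset.range t, L i (θseq s)) := by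
    intro t
    induction t with
    | zero => intro i; simp [hw0]
    | succ n ih =>
      intro i
      rw [hwsucc, ih, ← Real.exp_add, Finset.sum_range_succ, mul_add]
  have hwpos : ∀ t i, 0 < w t i := fun t i => by rw [hwf]; exact Real.exp_pos _
  set Φ : ℕ → ℝ := fun t => ∑ i, w t i with hΦ
  have hΦpos : ∀ t, 0 < Φ t := fun t =>
    Finset.sum_pos (fun i _ => hwpos t i) Finset.univ_nonempty
  set c : ℝ := η * (1 + η * R) with hc
  have hcpos : 0 < c := by
    have : 0 ≤ η * R := by positivity
    nlinarith
  -- one-step potential bound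
  have key : ∀ t, Φ (t + 1) ≤ Φ t * Real.exp (c * ∑ i, p t i * L i (θseq t)) := by
    intro t
    have h1 : Φ (t + 1) = ∑ i, w t i * Real.exp (η * L i (θseq t)) := by
      simp only [hΦ]
      exact Finset.sum_congr rfl fun i _ => hwsucc t i
    have h2 : ∀ i, Real.exp (η * L i (θseq t)) ≤ 1 + c * L i (θseq t) := by
      intro i
      obtain ⟨hl0, hlR⟩ := hL i (θseq t)
      have hy0 : 0 ≤ η * L i (θseq t) := by positivity
      have hy1 : η * L i (θseq t) ≤ 1 := by nlinarith
      have h := mw_exp_quad_bound hy0 hy1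
      have hsq : (η * L i (θseq t)) ^ 2 ≤ η * R * (η * L i (θseq t)) := by
        nlinarith [mul_nonneg (mul_nonneg (mul_nonneg hη.le hη.le) hl0)
          (sub_nonneg.mpr hlR)]
      rw [hc]; nlinarith
    have hpℓ : Φ t * ∑ i, p t i * L i (θseq t) = ∑ i, w t i * L i (θseq t) := by
      rw [Finset.mul_sum]
      refine Finset.sum_congr rfl fun i _ => ?_
      rw [hp]
      have : (∑ i', w t i') = Φ t := rfl
      rw [this, div_mul_eq_mul_div, mul_div_assoc']
      exact mul_div_cancel_left₀ _ (hΦpos t).ne'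
    calc Φ (t + 1) ≤ ∑ i, w t i * (1 + c * L i (θseq t)) := by
          rw [h1]
          exact Finset.sum_le_sum fun i _ =>
            mul_le_mul_of_nonneg_left (h2 i) (hwpos t i).le
      _ = Φ t + c * ∑ i, w t i * L i (θseq t) := by
          rw [Finset.mul_sum, ← Finset.sum_add_distrib]
          exact Finset.sum_congr rfl fun i _ => by ring
      _ = Φ t * (1 + c * ∑ i, p t i * L i (θseq t)) := by
          rw [mul_add, mul_one, mul_left_comm, hpℓ]
      _ ≤ Φ t * Real.exp (c * ∑ i, p t i * L i (θseq t)) := by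
          refine mul_le_mul_of_nonneg_left ?_ (hΦpos t).le
          linarith [Real.add_one_le_exp (c * ∑ i, p t i * L i (θseq t))]
  -- iterated potential bound
  have hΦbound : ∀ n, Φ n ≤ k *
      Real.exp (c * ∑ t ∈ Finset.range n, ∑ i, p t i * L i (θseq t)) := by
    intro n
    induction n with
    | zero => simp [hΦ, hw0]
    | succ n ih =>
      calc Φ (n + 1) ≤ Φ n * Real.exp (c * ∑ i, p n i * L i (θseq n)) := key n
        _ ≤ (k * Real.exp (c * ∑ t ∈ Finset.range n, ∑ i, p t i * L i (θseq t))) *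
              Real.exp (c * ∑ i, p n i * L i (θseq n)) :=
            mul_le_mul_of_nonneg_right ih (Real.exp_pos _).le
        _ = k * Real.exp (c * ∑ t ∈ Finset.range (n + 1), ∑ i, p t i * L i (θseq t)) := by
            rw [mul_assoc, ← Real.exp_add, Finset.sum_range_succ, mul_add]
  set S : ℝ := ∑ t ∈ Finset.range T, L j (θseq t) with hS
  set A : ℝ := ∑ t ∈ Finset.range T, ∑ i, p t i * L i (θseq t) with hA
  have hAle : A ≤ T * (OPT + δ) := by
    calc A ≤ ∑ _t ∈ Finset.range T, (OPT + δ) :=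
          Finset.sum_le_sum fun t ht => hOracle t (Finset.mem_range.mp ht)
      _ = T * (OPT + δ) := by
          rw [Finset.sum_const, Finset.card_range, nsmul_eq_mul]
  have h5 : Real.exp (η * S) ≤ k * Real.exp (c * A) := by
    rw [← hwf T j]
    exact le_trans
      (Finset.single_le_sum (f := w T) (fun i _ => (hwpos T i).le) (Finset.mem_univ j))
      (hΦbound T)
  have h6 : Real.exp (η * S) ≤ k * Real.exp (c * (T * (OPT + δ))) := by
    refine h5.trans (mul_le_mul_of_nonneg_left ?_ (by positivity))
    exact Real.exp_le_exp.mpr (mul_le_mul_of_nonneg_left hAle hcpos.le)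
  have hkpos : (0:ℝ) < k := Nat.cast_pos.mpr hk
  have h7 : η * S ≤ Real.log k + c * (T * (OPT + δ)) := by
    have hlog := Real.log_le_log (Real.exp_pos _) h6
    rwa [Real.log_exp, Real.log_mul hkpos.ne' (Real.exp_pos _).ne', Real.log_exp] at hlog
  have hTpos : (0:ℝ) < T := Nat.cast_pos.mpr hT
  have hceil : 4 * R ^ 2 * Real.log k / ε ^ 2 ≤ (T : ℝ) := by
    rw [hTdef]; exact Nat.le_ceil _
  have hlogk : Real.log k ≤ η * T * ε / 2 := by
    rw [div_le_iff₀ (by positivity)] at hceil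
    have heq : η * T * ε / 2 = T * ε ^ 2 / (4 * R ^ 2) := by
      rw [hηdef]; field_simp; ring
    rw [heq, le_div_iff₀ (by positivity : (0:ℝ) < 4 * R ^ 2)]
    nlinarith [hceil]
  have hterm : c * (T * (OPT + δ)) ≤ η * T * (OPT + δ) + η * T * ε / 2 := by
    have h1 : η * η * R * (T:ℝ) * (OPT + δ) ≤ η * η * R * (T:ℝ) * R :=
      mul_le_mul_of_nonneg_left hOPTδ (by positivity)
    have h2 : η * η * R * (T:ℝ) * R = η * T * ε / 2 := by
      rw [hηdef]; field_simp
    rw [hc]; nlinarith [h1, h2]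
  have hfinal : η * S ≤ η * (T * (OPT + δ + ε)) := by
    calc η * S ≤ Real.log k + c * (T * (OPT + δ)) := h7
      _ ≤ η * T * ε / 2 + (η * T * (OPT + δ) + η * T * ε / 2) := by linarith
      _ = η * (T * (OPT + δ + ε)) := by ring
  have hSle : S ≤ T * (OPT + δ + ε) := le_of_mul_le_mul_left hfinal hη
  calc (1 / (T : ℝ)) * S ≤ (1 / (T : ℝ)) * (T * (OPT + δ + ε)) :=
      mul_le_mul_of_nonneg_left hSle (by positivity)
    _ = OPT + δ + ε := by field_simp
end
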